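/- Let k ≥ 2, let ℒ be a volume-one metric structure on the wedge of k circles with volume entropy h_ℒ, and let f : (0,∞) → (0,∞) be a monotone non-increasing function with limsup_{x→∞} f(x)^{1/x} < e^{−h_ℒ}. Then C_f(ℒ) = Σ_{w ∈ 𝒞_k} f(ℓ_ℒ(w)) < ∞. -/

import Mathlib

/-!
Balls for the `L`-weighted word length `ℓ` are finite, so every conjugacy class has a
representative of least length; distinct classes have distinct representatives, hence
`C_f(L) ≤ ∑_g f(ℓ(g))`.
The limsup condition gives `f x ≤ ρ^x` for large `x` with some `ρ < e^{-h}`, and grouping `g`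
into the shells `⌈ℓ(g)⌉ = n` bounds the Poincaré series `∑_g ρ^{ℓ(g)}` by
`∑_n #{ℓ ≤ n} ρ^{n-1} ≲ ∑_n (e^β ρ)^n` for any `β` strictly between `h` and `-log ρ`.
-/

open Filter Topology
open scoped ENNReal

namespace McShane

/-- The ℒ-weighted length of the freely reduced form of `g`: the sum of `L i`
over all occurrences of `aᵢ^{±1}` in the reduced word of `g`. -/
noncomputable def wlen {k : ℕ} (L : Fin k → ℝ) (g : FreeGroup (Fin k)) : ℝ :=
  ((FreeGroup.toWord g).map fun x => L x.1).sum

/-- The hyperbolic length of a conjugacy class: the infimum of the ℒ-weighted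
lengths of its representatives. For positive edge lengths this equals
`∑ mᵢ·L i` where `mᵢ` counts occurrences of `aᵢ^{±1}` in the cyclically reduced form. -/
noncomputable def hlen {k : ℕ} (L : Fin k → ℝ) (c : ConjClasses (FreeGroup (Fin k))) : ℝ :=
  sInf (wlen L '' c.carrier)

/-- The open simplex `Δ_k` of volume-one metric structures on the wedge of `k` circles. -/
def simplex (k : ℕ) : Set (Fin k → ℝ) :=
  {L | (∀ i, 0 < L i) ∧ ∑ i, L i = 1}

/-- The barycentric point `ℒ* = (1/k, …, 1/k)`. -/
noncomputable def Lstar (k : ℕ) : Fin k → ℝ := fun _ => 1 / k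

/-- `g` is primitive iff it belongs to some free basis of the free group,
equivalently it is the image of a basis element under an automorphism. -/
def IsPrimitive {k : ℕ} (g : FreeGroup (Fin k)) : Prop :=
  ∃ (e : FreeGroup (Fin k) ≃* FreeGroup (Fin k)) (i : Fin k), e (FreeGroup.of i) = g

/-- `C_f(ℒ) = ∑_{w ∈ 𝒞_k} f(ℓ_ℒ(w))`, the sum over all nontrivial conjugacy classes. -/
noncomputable def Cf {k : ℕ} (f : ℝ → ℝ) (L : Fin k → ℝ) : ℝ≥0∞ :=
  ∑' c : {c : ConjClasses (FreeGroup (Fin k)) // c ≠ 1}, ENNReal.ofReal (f (hlen L c.1))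

/-- `P_f(ℒ) = ∑_{w ∈ 𝒫_k} f(ℓ_ℒ(w))`, the sum over conjugacy classes of primitive elements. -/
noncomputable def Pf {k : ℕ} (f : ℝ → ℝ) (L : Fin k → ℝ) : ℝ≥0∞ :=
  ∑' c : {c : ConjClasses (FreeGroup (Fin k)) // ∃ g, IsPrimitive g ∧ ConjClasses.mk g = c},
    ENNReal.ofReal (f (hlen L c.1))

theorem tsum_ne_top_of_eventually_le {ι : Type*} {F G : ι → ℝ≥0∞} (hF : ∀ i, F i ≠ ⊤)
    (hFG : ∀ᶠ i in cofinite, F i ≤ G i) (hG : ∑' i, G i ≠ ⊤) : ∑' i, F i ≠ ⊤ := by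
  classical
  set s := (Filter.eventually_cofinite.1 hFG).toFinset
  have hcompl : ∑' i : ↥(s : Set ι)ᶜ, F i ≤ ∑' i, G i :=
    (ENNReal.tsum_le_tsum fun i => by simpa [s] using i.2).trans
      (ENNReal.tsum_comp_le_tsum_of_injective Subtype.val_injective G)
  rw [← ENNReal.sum_add_tsum_compl s]
  exact ENNReal.add_ne_top.2
    ⟨ENNReal.sum_ne_top.2 fun i _ => hF i, ne_top_of_le_ne_top hG hcompl⟩

section GrowthRate

variable {N : ℝ → ℕ} {h : ℝ}

theorem nonneg_of_tendsto_log_div (hent : Tendsto (fun R => Real.log (N R) / R) atTop (𝓝 h)) :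
    0 ≤ h :=
  ge_of_tendsto hent <| by
    filter_upwards [eventually_gt_atTop 0] with R hR using
      div_nonneg (Real.log_natCast_nonneg _) hR.le

theorem eventually_le_exp_of_tendsto_log_div
    (hent : Tendsto (fun R => Real.log (N R) / R) atTop (𝓝 h)) {β : ℝ} (hβ : h < β) :
    ∀ᶠ R in atTop, (N R : ℝ) ≤ Real.exp (β * R) := by
  filter_upwards [hent.eventually_lt_const hβ, eventually_gt_atTop 0] with R hR hR0
  calc (N R : ℝ) ≤ Real.exp (Real.log (N R)) := Real.le_exp_log _
    _ ≤ Real.exp (β * R) := Real.exp_le_exp.2 ((div_lt_iff₀ hR0).1 hR).le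

end GrowthRate

section PoincareSeries

variable {α : Type*} (ℓ : α → ℝ) [Northcott ℓ] {ρ : ℝ}

theorem tsum_shell_le (hℓ : ∀ a, 0 ≤ ℓ a) (hρ0 : 0 < ρ) (hρ1 : ρ ≤ 1) (n : ℕ) :
    ∑' a : (fun a => ⌈ℓ a⌉₊) ⁻¹' {n}, ENNReal.ofReal (ρ ^ ℓ a) ≤
      ENNReal.ofReal (Nat.card {a // ℓ a ≤ n} * ρ ^ ((n : ℝ) - 1)) := by
  set S := (fun a => ⌈ℓ a⌉₊) ⁻¹' {n}
  have hS : S ⊆ {a | ℓ a ≤ n} := fun a (ha : ⌈ℓ a⌉₊ = n) => ha ▸ Nat.le_ceil (ℓ a)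
  calc ∑' a : S, ENNReal.ofReal (ρ ^ ℓ a)
        ≤ ∑' _ : S, ENNReal.ofReal (ρ ^ ((n : ℝ) - 1)) := by
        refine ENNReal.tsum_le_tsum fun a => ENNReal.ofReal_le_ofReal ?_
        refine Real.rpow_le_rpow_of_exponent_ge hρ0 hρ1 ?_
        have hceil : ⌈ℓ a⌉₊ < ℓ a + 1 := Nat.ceil_lt_add_one (hℓ a)
        rw [show ⌈ℓ a⌉₊ = n from a.2] at hceil
        linarith
    _ = S.encard * ENNReal.ofReal (ρ ^ ((n : ℝ) - 1)) := ENNReal.tsum_set_const _ _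
    _ ≤ {a | ℓ a ≤ n}.encard * ENNReal.ofReal (ρ ^ ((n : ℝ) - 1)) := by
        gcongr
    _ = ENNReal.ofReal (Nat.card {a // ℓ a ≤ n} * ρ ^ ((n : ℝ) - 1)) := by
        rw [ENNReal.ofReal_mul (Nat.cast_nonneg _), ENNReal.ofReal_natCast,
          ← (Northcott.finite_le (n : ℝ)).cast_ncard_eq, ENat.toENNReal_coe]
        rfl

theorem tsum_ofReal_rpow_ne_top (hℓ : ∀ a, 0 ≤ ℓ a) {h : ℝ}
    (hent : Tendsto (fun R => Real.log (Nat.card {a // ℓ a ≤ R}) / R) atTop (𝓝 h))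
    (hρ0 : 0 < ρ) (hρh : ρ < Real.exp (-h)) :
    ∑' a, ENNReal.ofReal (ρ ^ ℓ a) ≠ ⊤ := by
  have hρ1 : ρ ≤ 1 :=
    hρh.le.trans (Real.exp_le_one_iff.2 (neg_nonpos.2 (nonneg_of_tendsto_log_div hent)))
  obtain ⟨β, hhβ, hβρ⟩ : ∃ β, h < β ∧ β < -Real.log ρ :=
    exists_between (by linarith [(Real.log_lt_iff_lt_exp hρ0).2 hρh])
  have hratio0 : 0 ≤ Real.exp β * ρ := by positivity
  have hratio1 : Real.exp β * ρ < 1 := by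
    rw [← Real.exp_log hρ0, ← Real.exp_add, Real.exp_lt_one_iff]
    linarith
  rw [← ENNReal.tsum_fiberwise _ fun a => ⌈ℓ a⌉₊]
  refine tsum_ne_top_of_eventually_le
    (G := fun n : ℕ => ENNReal.ofReal (ρ⁻¹ * (Real.exp β * ρ) ^ n))
    (fun n => ne_top_of_le_ne_top ENNReal.ofReal_ne_top (tsum_shell_le ℓ hℓ hρ0 hρ1 n)) ?_
    ((summable_geometric_of_lt_one hratio0 hratio1).mul_left _).tsum_ofReal_ne_top
  rw [Nat.cofinite_eq_atTop]
  filter_upwards [tendsto_natCast_atTop_atTop.eventually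
    (eventually_le_exp_of_tendsto_log_div hent hhβ)] with n hn
  refine (tsum_shell_le ℓ hℓ hρ0 hρ1 n).trans (ENNReal.ofReal_le_ofReal ?_)
  calc (Nat.card {a // ℓ a ≤ n} : ℝ) * ρ ^ ((n : ℝ) - 1)
        ≤ Real.exp (β * n) * ρ ^ ((n : ℝ) - 1) := by gcongr
    _ = ρ⁻¹ * (Real.exp β * ρ) ^ n := by
        rw [Real.rpow_sub_one hρ0.ne', Real.rpow_natCast, mul_pow, mul_comm β, Real.exp_nat_mul]
        field_simp

end PoincareSeries

section DecayRate

variable {f : ℝ → ℝ}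

theorem isBoundedUnder_rpow_one_div (hf_pos : ∀ x > (0:ℝ), 0 < f x)
    (hf_anti : AntitoneOn f (Set.Ioi 0)) :
    IsBoundedUnder (· ≤ ·) atTop fun x => f x ^ (1 / x) := by
  refine ⟨max (f 1) 1, eventually_map.2 ?_⟩
  filter_upwards [eventually_ge_atTop (1:ℝ)] with x hx
  have hx0 : (0:ℝ) < x := one_pos.trans_le hx
  rcases le_or_gt (f x) 1 with hfx | hfx
  · exact (Real.rpow_le_one (hf_pos x hx0).le hfx (by positivity)).trans (le_max_right _ _)
  · calc f x ^ (1 / x) ≤ f x ^ (1:ℝ) :=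
          Real.rpow_le_rpow_of_exponent_le hfx.le ((div_le_one hx0).2 hx)
      _ ≤ f 1 := (Real.rpow_one _).trans_le (hf_anti (Set.mem_Ioi.2 one_pos) hx0 hx)
      _ ≤ max (f 1) 1 := le_max_left _ _

theorem eventually_le_rpow_of_limsup_lt (hf_pos : ∀ x > (0:ℝ), 0 < f x)
    (hf_anti : AntitoneOn f (Set.Ioi 0)) {ρ : ℝ}
    (hρ : limsup (fun x => f x ^ (1 / x)) atTop < ρ) :
    ∀ᶠ x in atTop, f x ≤ ρ ^ x := by
  filter_upwards [eventually_lt_of_limsup_lt hρ (isBoundedUnder_rpow_one_div hf_pos hf_anti),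
    eventually_gt_atTop 0] with x hx hx0
  calc f x = (f x ^ x⁻¹) ^ x := (Real.rpow_inv_rpow (hf_pos x hx0).le hx0.ne').symm
    _ ≤ ρ ^ x := by
        rw [← one_div]
        exact Real.rpow_le_rpow (Real.rpow_nonneg (hf_pos x hx0).le _) hx.le hx0.le

end DecayRate

section WordLength

variable {k : ℕ} {L : Fin k → ℝ}

theorem wlen_nonneg (hL : ∀ i, 0 ≤ L i) (g : FreeGroup (Fin k)) : 0 ≤ wlen L g :=
  List.sum_nonneg fun _ hx => by
    obtain ⟨x, -, rfl⟩ := List.mem_map.1 hx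
    exact hL x.1

theorem mul_length_le_wlen {m : ℝ} (hm : ∀ i, m ≤ L i) (g : FreeGroup (Fin k)) :
    m * (FreeGroup.toWord g).length ≤ wlen L g := by
  rw [mul_comm, ← nsmul_eq_mul, ← List.length_map (fun x : Fin k × Bool => L x.1)]
  exact List.card_nsmul_le_sum _ _ fun _ hx => by
    obtain ⟨x, -, rfl⟩ := List.mem_map.1 hx
    exact hm x.1

theorem northcott_wlen (hL : ∀ i, 0 < L i) : Northcott (wlen L) := by
  obtain ⟨m, hm0, hm⟩ : ∃ m : ℝ, 0 < m ∧ ∀ i, m ≤ L i :=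
    ((eventually_mem_nhdsWithin (a := (0:ℝ)) (s := Set.Ioi 0)).and
      (eventually_all.2 fun i => nhdsWithin_le_nhds (eventually_le_nhds (hL i)))).exists
  refine ⟨fun R => ((List.finite_length_le _ ⌊R / m⌋₊).preimage
    FreeGroup.toWord_injective.injOn).subset fun g (hg : wlen L g ≤ R) => ?_⟩
  refine Nat.le_floor ((le_div_iff₀ hm0).2 ?_)
  linarith [mul_length_le_wlen hm g]

theorem exists_wlen_eq_hlen [Northcott (wlen L)] (c : ConjClasses (FreeGroup (Fin k))) :
    ∃ g, ConjClasses.mk g = c ∧ wlen L g = hlen L c := by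
  obtain ⟨g, hg, hmin⟩ := Northcott.exists_min_image (wlen L) c.carrier
    (c.exists_rep.imp fun _ => ConjClasses.mem_carrier_iff_mk_eq.2)
  exact ⟨g, ConjClasses.mem_carrier_iff_mk_eq.1 hg,
    (IsLeast.csInf_eq ⟨Set.mem_image_of_mem _ hg, Set.forall_mem_image.2 hmin⟩).symm⟩

theorem cf_le_tsum_wlen [Northcott (wlen L)] (f : ℝ → ℝ) :
    Cf f L ≤ ∑' g, ENNReal.ofReal (f (wlen L g)) := by
  choose G hG hGlen using exists_wlen_eq_hlen (L := L)
  have hinj : Function.Injective fun c : {c : ConjClasses (FreeGroup (Fin k)) // c ≠ 1} => G c :=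
    fun c c' hcc => Subtype.ext ((hG c).symm.trans ((congrArg ConjClasses.mk hcc).trans (hG c')))
  calc Cf f L = ∑' c : {c : ConjClasses (FreeGroup (Fin k)) // c ≠ 1},
        ENNReal.ofReal (f (wlen L (G c))) := by simp only [Cf, hGlen]
    _ ≤ ∑' g, ENNReal.ofReal (f (wlen L g)) := ENNReal.tsum_comp_le_tsum_of_injective hinj _

end WordLength

theorem mcshane_stmt9_general (k : ℕ) (L : Fin k → ℝ) (hL : L ∈ simplex k)
    (h : ℝ)
    (hent : Tendsto (fun R : ℝ =>
        Real.log (Nat.card {g : FreeGroup (Fin k) // wlen L g ≤ R}) / R) atTop (𝓝 h))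
    (f : ℝ → ℝ)
    (hf_pos : ∀ x > (0:ℝ), 0 < f x)
    (hf_anti : AntitoneOn f (Set.Ioi 0))
    (hf_limsup : limsup (fun x : ℝ => f x ^ (1 / x)) atTop < Real.exp (-h)) :
    Cf f L < ⊤ := by
  have hnorthcott := northcott_wlen hL.1
  obtain ⟨ρ, hρ, hρh⟩ := exists_between (max_lt hf_limsup (Real.exp_pos (-h)))
  have hf_le : ∀ᶠ x in atTop, f x ≤ ρ ^ x :=
    eventually_le_rpow_of_limsup_lt hf_pos hf_anti ((le_max_left _ _).trans_lt hρ)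
  have hpoincare : ∑' g, ENNReal.ofReal (ρ ^ wlen L g) ≠ ⊤ :=
    tsum_ofReal_rpow_ne_top _ (wlen_nonneg fun i => (hL.1 i).le) hent
      ((le_max_right _ _).trans_lt hρ) hρh
  refine (cf_le_tsum_wlen f).trans_lt (lt_top_iff_ne_top.2 ?_)
  refine tsum_ne_top_of_eventually_le (fun _ => ENNReal.ofReal_ne_top) ?_ hpoincare
  exact ((northcott_iff_tendsto _).1 hnorthcott).eventually
    (hf_le.mono fun _ => ENNReal.ofReal_le_ofReal)

/-- If `L ∈ Δ_k` has volume entropy `h` and `f` is positive, non-increasing with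
`limsup_{x→∞} f(x)^{1/x} < e^{−h}`, then `C_f(L) < ∞`. -/
theorem mcshane_stmt9 (k : ℕ) (hk : 2 ≤ k) (L : Fin k → ℝ) (hL : L ∈ simplex k)
    (h : ℝ)
    (hent : Tendsto (fun R : ℝ =>
        Real.log (Nat.card {g : FreeGroup (Fin k) // wlen L g ≤ R}) / R) atTop (𝓝 h))
    (f : ℝ → ℝ)
    (hf_pos : ∀ x > (0:ℝ), 0 < f x)
    (hf_anti : AntitoneOn f (Set.Ioi 0))
    (hf_limsup : limsup (fun x : ℝ => f x ^ (1 / x)) atTop < Real.exp (-h)) :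
    Cf f L < ⊤ :=
  mcshane_stmt9_general k L hL h hent f hf_pos hf_anti hf_limsup

end McShane
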